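/- Let ω(1), …, ω(q) be positive real numbers such that Σ_{j∈K} ω(j) ≤ (n - u + 2 + b)·c(K) for every subset K ⊆ Q with |K| ≤ N + 1. Then for all nonnegative real numbers E_1, …, E_q and every subset R ⊆ Q with |R| = N + 1, there exist pairwise distinct indices j_1, …, j_{n₀+1} ∈ R such that the linear span of {H_{j_1}, …, H_{j_{n₀+1}}} equals the linear span of {H_j : j ∈ R} and Σ_{j∈R} ω(j)·E_j ≤ (n - u + 2 + b)·(E_{j_1} + ⋯ + E_{j_{n₀+1}}). -/

import Mathlib

/-- The dimension of the linear span of the linear forms `H j`, `j ∈ K`. -/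
noncomputable def cdim (q m : ℕ) (H : Fin q → Module.Dual ℂ (Fin (m + 1) → ℂ))
    (K : Finset (Fin q)) : ℕ :=
  Module.finrank ℂ (Submodule.span ℂ (H '' (K : Set (Fin q))))

/-- `n + 1`, where `n = (max_{K ⊆ Q} c(K)) - 1`. -/
noncomputable def nDimSucc (q m : ℕ) (H : Fin q → Module.Dual ℂ (Fin (m + 1) → ℂ)) : ℕ :=
  Finset.univ.powerset.sup (cdim q m H)

/-- `n₀ + 1`, where `n₀ = (max_{K ⊆ Q, |K| ≤ N+1} c(K)) - 1`. -/
noncomputable def n0DimSucc (q m N : ℕ) (H : Fin q → Module.Dual ℂ (Fin (m + 1) → ℂ)) : ℕ :=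
  (Finset.univ.powerset.filter (fun K : Finset (Fin q) => K.card ≤ N + 1)).sup (cdim q m H)

/-!
Put `A = n - u + 2 + b`; the rank condition gives `A ≥ n + 2 - c(R) ≥ 1`. Let `e` be the least
value of `E` on `R` and write `E = (E - e) + e`. The part `E - e` vanishes where the minimum is
attained, so by induction on `|R|` it is controlled by a linearly independent set `S'` of the
remaining indices, while the constant part `e` is controlled by `∑_R ω ≤ A c(R)`. Extending `S'`
inside `R` to a basis `S` of the span handles both at once, since `|S| = c(R)` and `E - e ≥ 0` on
`S \ S'`. Finally `|S| = c(R) ≤ n₀ + 1 ≤ |R|`, so `S` can be padded inside `R` to exactly `n₀ + 1`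
indices.
-/

open Module Submodule

section LinearIndepOn

variable {K V ι : Type*} [DivisionRing K] [AddCommGroup V] [Module K V] {v : ι → V}

theorem LinearIndepOn.finrank_span_image_finset {S : Finset ι} (h : LinearIndepOn K v S) :
    finrank K (span K (v '' S)) = S.card := by
  rw [Set.image_eq_range, finrank_span_eq_card h]; exact Fintype.card_coe S

theorem LinearIndepOn.exists_finset_extension {s R : Finset ι} (hs : LinearIndepOn K v s)
    (hsR : s ⊆ R) :
    ∃ S : Finset ι, s ⊆ S ∧ S ⊆ R ∧ LinearIndepOn K v S ∧ span K (v '' S) = span K (v '' R) := by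
  obtain ⟨b, hbR, hsb, hRb, hb⟩ := exists_linearIndepOn_extension hs (Finset.coe_subset.2 hsR)
  obtain ⟨S, rfl⟩ := (R.finite_toSet.subset hbR).exists_finset_coe
  exact ⟨S, Finset.coe_subset.1 hsb, Finset.coe_subset.1 hbR, hb,
    le_antisymm (span_mono (Set.image_mono hbR)) (span_le.2 hRb)⟩

theorem exists_linearIndepOn_span_eq_sum_mul_le {A : ℝ} (hA : 0 ≤ A) (ω E : ι → ℝ)
    (R : Finset ι) (hω : ∀ T ⊆ R, ∑ j ∈ T, ω j ≤ A * finrank K (span K (v '' T)))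
    (hE : ∀ j ∈ R, 0 ≤ E j) :
    ∃ S ⊆ R, LinearIndepOn K v S ∧ span K (v '' S) = span K (v '' R) ∧
      ∑ j ∈ R, ω j * E j ≤ A * ∑ j ∈ S, E j := by
  classical
  induction R using Finset.strongInduction generalizing E with
  | H R ih =>
  rcases R.eq_empty_or_nonempty with rfl | hR
  · exact ⟨∅, subset_rfl, by simp, rfl, by simp⟩
  obtain ⟨t, htR, hmin⟩ := R.exists_min_image E hR
  set e := E t
  set R' := R.filter (E · ≠ e)
  have hR'R : R' ⊂ R := Finset.filter_ssubset.2 ⟨t, htR, not_not.2 rfl⟩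
  obtain ⟨S', hS'R', hS', -, hS'sum⟩ := ih R' hR'R (E · - e)
    (fun T hT => hω T (hT.trans hR'R.subset)) (fun j hj => sub_nonneg.2 (hmin j (hR'R.subset hj)))
  obtain ⟨S, hS'S, hSR, hS, hSspan⟩ := hS'.exists_finset_extension (hS'R'.trans hR'R.subset)
  refine ⟨S, hSR, hS, hSspan, ?_⟩
  have hR'sum : ∑ j ∈ R', ω j * (E j - e) = ∑ j ∈ R, ω j * (E j - e) :=
    Finset.sum_filter_of_ne fun j _ h he => h (by rw [he, sub_self, mul_zero])
  have hωR : e * ∑ j ∈ R, ω j ≤ A * (S.card * e) := by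
    have := mul_le_mul_of_nonneg_left (hω R subset_rfl) (hE t htR)
    rw [← hSspan, hS.finrank_span_image_finset] at this
    linarith
  have hsum_mono : ∑ j ∈ S', (E j - e) ≤ ∑ j ∈ S, (E j - e) :=
    Finset.sum_le_sum_of_subset_of_nonneg hS'S fun j hj _ => sub_nonneg.2 (hmin j (hSR hj))
  calc ∑ j ∈ R, ω j * E j = ∑ j ∈ R, ω j * (E j - e) + e * ∑ j ∈ R, ω j := by
        rw [Finset.mul_sum, ← Finset.sum_add_distrib]; congr! 1 with j; ring
    _ ≤ A * ∑ j ∈ S, (E j - e) + A * (S.card * e) := by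
        rw [← hR'sum]; gcongr; exact hS'sum.trans (mul_le_mul_of_nonneg_left hsum_mono hA)
    _ = A * ∑ j ∈ S, E j := by
        rw [Finset.sum_sub_distrib, Finset.sum_const, nsmul_eq_mul]; ring

end LinearIndepOn

section cdim

variable {q m : ℕ} {H : Fin q → Module.Dual ℂ (Fin (m + 1) → ℂ)}

theorem cdim_le_card (K : Finset (Fin q)) : cdim q m H K ≤ K.card := by
  classical
  unfold cdim
  rw [← Finset.coe_image]
  exact (finrank_span_finset_le_card _).trans Finset.card_image_le

theorem cdim_le_nDimSucc (K : Finset (Fin q)) : cdim q m H K ≤ nDimSucc q m H :=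
  Finset.le_sup (Finset.mem_powerset.2 (Finset.subset_univ K))

theorem cdim_le_n0DimSucc {N : ℕ} {K : Finset (Fin q)} (hK : K.card ≤ N + 1) :
    cdim q m H K ≤ n0DimSucc q m N H :=
  Finset.le_sup (Finset.mem_filter.2 ⟨Finset.mem_powerset.2 (Finset.subset_univ K), hK⟩)

theorem n0DimSucc_le_succ (N : ℕ) : n0DimSucc q m N H ≤ N + 1 :=
  Finset.sup_le fun K hK => (cdim_le_card K).trans (Finset.mem_filter.1 hK).2

end cdim

theorem stmt6_general (q m : ℕ)
    (H : Fin q → Module.Dual ℂ (Fin (m + 1) → ℂ))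
    (N : ℕ)
    (u b : ℤ)
    (hrank : ∀ R : Finset (Fin q), R.card = N + 1 → u - b ≤ (cdim q m H R : ℤ))
    (ω : Fin q → ℝ)
    (hωsum : ∀ K : Finset (Fin q), K.card ≤ N + 1 →
      ∑ j ∈ K, ω j ≤
        (((nDimSucc q m H : ℝ) - 1) - (u : ℝ) + 2 + (b : ℝ)) * (cdim q m H K : ℝ))
    (E : Fin q → ℝ) (hE : ∀ j : Fin q, 0 ≤ E j)
    (R : Finset (Fin q)) (hR : R.card = N + 1) :
    ∃ j : Fin (n0DimSucc q m N H) → Fin q,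
      Function.Injective j ∧ (∀ i, j i ∈ R) ∧
      Submodule.span ℂ (Set.range (H ∘ j)) = Submodule.span ℂ (H '' (R : Set (Fin q))) ∧
      ∑ l ∈ R, ω l * E l ≤
        (((nDimSucc q m H : ℝ) - 1) - (u : ℝ) + 2 + (b : ℝ)) * ∑ i, E (j i) := by
  set A : ℝ := ((nDimSucc q m H : ℝ) - 1) - (u : ℝ) + 2 + (b : ℝ)
  have hA : 0 ≤ A := by
    have hrankR : ((u - b : ℤ) : ℝ) ≤ cdim q m H R := by exact_mod_cast hrank R hR
    have hcdim : (cdim q m H R : ℝ) ≤ nDimSucc q m H := by exact_mod_cast cdim_le_nDimSucc R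
    push_cast at hrankR
    linarith
  obtain ⟨S, hSR, hS, hSspan, hSsum⟩ := exists_linearIndepOn_span_eq_sum_mul_le hA ω E R
    (fun K hK => hωsum K (hR ▸ Finset.card_le_card hK)) (fun j _ => hE j)
  have hScard : S.card ≤ n0DimSucc q m N H := by
    rw [← hS.finrank_span_image_finset, hSspan]
    exact cdim_le_n0DimSucc hR.le
  obtain ⟨T, hST, hTR, hT⟩ := Finset.exists_subsuperset_card_eq hSR hScard
    (hR ▸ n0DimSucc_le_succ N)
  refine ⟨T.orderEmbOfFin hT, (T.orderEmbOfFin hT).injective,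
    fun i => hTR (T.orderEmbOfFin_mem hT i), ?_, ?_⟩
  · rw [Set.range_comp, T.range_orderEmbOfFin hT]
    exact le_antisymm (span_mono (Set.image_mono hTR)) (hSspan ▸ span_mono (Set.image_mono hST))
  · calc ∑ l ∈ R, ω l * E l ≤ A * ∑ l ∈ S, E l := hSsum
      _ ≤ A * ∑ l ∈ T, E l :=
        mul_le_mul_of_nonneg_left (Finset.sum_le_sum_of_subset_of_nonneg hST fun j _ _ => hE j) hA
      _ = A * ∑ i, E (T.orderEmbOfFin hT i) := by
        nth_rw 1 [← T.map_orderEmbOfFin_univ hT, Finset.sum_map]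
        rfl

theorem stmt6 (q m : ℕ) (hq : 0 < q)
    (H : Fin q → Module.Dual ℂ (Fin (m + 1) → ℂ))
    (N : ℕ) (hN : 0 < N) (hNq : N + 1 ≤ q)
    (u b : ℤ) (hb : -1 ≤ b) (hub : b < u)
    (hrank : ∀ R : Finset (Fin q), R.card = N + 1 → u - b ≤ (cdim q m H R : ℤ))
    (ω : Fin q → ℝ) (hω : ∀ j : Fin q, 0 < ω j)
    (hωsum : ∀ K : Finset (Fin q), K.card ≤ N + 1 →
      ∑ j ∈ K, ω j ≤
        (((nDimSucc q m H : ℝ) - 1) - (u : ℝ) + 2 + (b : ℝ)) * (cdim q m H K : ℝ))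
    (E : Fin q → ℝ) (hE : ∀ j : Fin q, 0 ≤ E j)
    (R : Finset (Fin q)) (hR : R.card = N + 1) :
    ∃ j : Fin (n0DimSucc q m N H) → Fin q,
      Function.Injective j ∧ (∀ i, j i ∈ R) ∧
      Submodule.span ℂ (Set.range (H ∘ j)) = Submodule.span ℂ (H '' (R : Set (Fin q))) ∧
      ∑ l ∈ R, ω l * E l ≤
        (((nDimSucc q m H : ℝ) - 1) - (u : ℝ) + 2 + (b : ℝ)) * ∑ i, E (j i) :=
  stmt6_general q m H N u b hrank ω hωsum E hE R hR
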